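/- Let k be a field of characteristic zero, X a finite type equipped with a fixed-point-free involution c : X → X, and Σ a subset of X such that Σ and c(Σ) are disjoint with union X; let g = |Σ|. Fix a linear order on X, let V be the k-vector space with basis (e_x)_{x∈X}, and in Λ(V) set L = ∑_{σ∈Σ} e_σ ∧ e_{cσ}, writing e_S for the ordered wedge product over S ⊆ X. Let 2 ≤ i ≤ g, let I ⊆ Σ, J ⊆ c(Σ) with |I| + |J| = i, and let η be the unique element of Λ^{i-2}V with L^{g-i+2} ∧ η = L^{g-i+1} ∧ e_{I∪J} (such η exists and is unique by hard Lefschetz). If, for I' ⊆ Σ and J' ⊆ c(Σ) with |I'| + |J'| = i − 2, the coefficient of e_{I'∪J'} in η with respect to the basis {e_S : S ⊆ X, |S| = i−2} of Λ^{i-2}V is nonzero, then I \ c(J) = I' \ c(J') and J \ c(I) = J' \ c(I'). -/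

import Mathlib

/-- The basis vector `e_x` of `V = X → k` inside the exterior algebra `Λ(V)`. -/
noncomputable def eVec (k : Type*) {X : Type*} [Field k] [DecidableEq X] (x : X) :
    ExteriorAlgebra k (X → k) :=
  ExteriorAlgebra.ι k (Pi.single x 1)

/-- The ordered wedge product `e_S = ⋀_{x ∈ S} e_x` over a finite subset `S ⊆ X`,
taken in the fixed linear order on `X`. -/
noncomputable def eWedge (k : Type*) {X : Type*} [Field k] [LinearOrder X] (S : Finset X) :
    ExteriorAlgebra k (X → k) :=
  ((S.sort (· ≤ ·)).map (eVec k)).prod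

/-- The isotypic component `L_σ = e_σ ∧ e_{cσ}` of the Lefschetz class. -/
noncomputable def Lsigma (k : Type*) {X : Type*} [Field k] [DecidableEq X] (c : X → X) (σ : X) :
    ExteriorAlgebra k (X → k) :=
  eVec k σ * eVec k (c σ)

/-- The product `L_K = ∏_{σ ∈ K} L_σ` (the factors `L_σ` have even degree, hence commute,
so the ordered product represents the product). -/
noncomputable def LK (k : Type*) {X : Type*} [Field k] [LinearOrder X] (c : X → X)
    (K : Finset X) : ExteriorAlgebra k (X → k) :=
  ((K.sort (· ≤ ·)).map (Lsigma k c)).prod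

/-- The Lefschetz class `L = ∑_{σ ∈ Σ} L_σ = ∑_{σ ∈ Σ} e_σ ∧ e_{cσ}`. -/
noncomputable def Lef (k : Type*) {X : Type*} [Field k] [DecidableEq X] (c : X → X)
    (S : Finset X) : ExteriorAlgebra k (X → k) :=
  ∑ σ ∈ S, Lsigma k c σ

/-!
Write `T = R ∪ K ∪ cK`, where `R`, the reduced part of `T`, consists of the `x ∈ T` with
`cx ∉ T`, and `K ⊆ Σ` indexes the pairs `{σ, cσ} ⊆ T`. Then `e_T = ± L_K e_R`, and the reduced
type of `(I, J)` is the reduced part of `I ∪ J`, split along `Σ ⊔ cΣ`.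

Multiplication by `L` preserves the reduced part and acts on the coordinates along the vectors
`L_K e_R` as the raising operator `U` of the Boolean lattice of the set `A` of the `σ ∈ Σ` with
`σ, cσ ∉ R`. Let `R₀` be the reduced part of `I' ∪ J'`. If the reduced part of `I ∪ J` were
different, the `R₀`-coordinates `f` of `η` would satisfy `U^{g-i+2} f = 0`. But `f` is supported
on the subsets of `A` of size `p = (i - 2 - |R₀|) / 2`, and `2p + (g - i + 2) ≤ |A|`, so
`U^{g-i+2}` is injective there (hard Lefschetz for the Boolean lattice, from `[D, U] = |A| - 2p`
on level `p`); while `f` does not vanish at the set of pairs of `I' ∪ J'`.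
-/

open Finset

section Wedge

noncomputable def listWedge (k : Type*) {X : Type*} [Field k] [DecidableEq X] (l : List X) :
    ExteriorAlgebra k (X → k) :=
  (l.map (eVec k)).prod

variable {k X : Type*} [Field k]

section DecidableEq

variable [DecidableEq X]

@[simp]
lemma listWedge_nil : listWedge k ([] : List X) = 1 := rfl

@[simp]
lemma listWedge_cons (x : X) (l : List X) :
    listWedge k (x :: l) = eVec k x * listWedge k l := by
  simp [listWedge]

lemma eVec_mul_self (x : X) : eVec k x * eVec k x = 0 := ExteriorAlgebra.ι_sq_zero _

lemma eVec_mul_eVec_comm (x y : X) : eVec k x * eVec k y = -(eVec k y * eVec k x) :=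
  eq_neg_of_add_eq_zero_left (ExteriorAlgebra.ι_add_mul_swap _ _)

lemma eVec_mul_listWedge_of_mem {x : X} {l : List X} (h : x ∈ l) :
    eVec k x * listWedge k l = 0 := by
  induction l with
  | nil => simp at h
  | cons y l ih =>
    rw [listWedge_cons, ← mul_assoc]
    rcases List.mem_cons.mp h with rfl | h
    · rw [eVec_mul_self, zero_mul]
    · rw [eVec_mul_eVec_comm, neg_mul, mul_assoc, ih h, mul_zero, neg_zero]

lemma exists_listWedge_eq_smul_of_perm {l l' : List X} (h : l.Perm l') :
    ∃ ε : k, ε ≠ 0 ∧ listWedge k l = ε • listWedge k l' := by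
  induction h with
  | nil => exact ⟨1, one_ne_zero, by simp⟩
  | cons x _ ih =>
    obtain ⟨ε, hε, h⟩ := ih
    exact ⟨ε, hε, by rw [listWedge_cons, h, mul_smul_comm, listWedge_cons]⟩
  | swap x y l =>
    refine ⟨-1, neg_ne_zero.mpr one_ne_zero, ?_⟩
    simp only [listWedge_cons, ← mul_assoc, eVec_mul_eVec_comm y x, neg_mul, neg_one_smul]
  | trans _ _ ih ih' =>
    obtain ⟨ε, hε, h⟩ := ih
    obtain ⟨δ, hδ, h'⟩ := ih'
    exact ⟨ε * δ, mul_ne_zero hε hδ, by rw [h, h', smul_smul]⟩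

end DecidableEq

variable [LinearOrder X]

lemma eWedge_eq_listWedge (T : Finset X) : eWedge k T = listWedge k (T.sort (· ≤ ·)) := rfl

lemma exists_listWedge_eq_smul_eWedge {l : List X} (hl : l.Nodup) :
    ∃ ε : k, ε ≠ 0 ∧ listWedge k l = ε • eWedge k l.toFinset :=
  exists_listWedge_eq_smul_of_perm
    (List.perm_of_nodup_nodup_toFinset_eq hl (sort_nodup _ _) (sort_toFinset _ _).symm)

lemma eVec_mul_eWedge_of_mem {x : X} {T : Finset X} (h : x ∈ T) : eVec k x * eWedge k T = 0 :=
  eVec_mul_listWedge_of_mem ((mem_sort _).mpr h)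

lemma exists_eVec_mul_eWedge_eq_smul {x : X} {T : Finset X} (h : x ∉ T) :
    ∃ ε : k, ε ≠ 0 ∧ eVec k x * eWedge k T = ε • eWedge k (insert x T) := by
  have hl : (x :: T.sort (· ≤ ·)).Nodup := List.nodup_cons.mpr ⟨by simpa using h, sort_nodup _ _⟩
  rw [eWedge_eq_listWedge]
  simpa using exists_listWedge_eq_smul_eWedge (k := k) hl

end Wedge

section ReducedPart

variable {X : Type*} [DecidableEq X] {c : X → X} {S : Finset X}

def IsPairFree (c : X → X) (R : Finset X) : Prop := ∀ x ∈ R, c x ∉ R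

def reducedPart (c : X → X) (T : Finset X) : Finset X := T.filter fun x => c x ∉ T

def pairedPart (c : X → X) (S T : Finset X) : Finset X := S.filter fun σ => σ ∈ T ∧ c σ ∈ T

def freePairs (c : X → X) (S R : Finset X) : Finset X := S.filter fun σ => σ ∉ R ∧ c σ ∉ R

@[simp]
lemma mem_reducedPart {T : Finset X} {x : X} : x ∈ reducedPart c T ↔ x ∈ T ∧ c x ∉ T :=
  mem_filter

@[simp]
lemma mem_pairedPart {T : Finset X} {σ : X} :
    σ ∈ pairedPart c S T ↔ σ ∈ S ∧ σ ∈ T ∧ c σ ∈ T :=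
  mem_filter

@[simp]
lemma mem_freePairs {R : Finset X} {σ : X} : σ ∈ freePairs c S R ↔ σ ∈ S ∧ σ ∉ R ∧ c σ ∉ R :=
  mem_filter

lemma apply_notMem_of_mem (hdisj : Disjoint S (S.image c)) {x : X} (hx : x ∈ S) : c x ∉ S :=
  fun h => disjoint_left.mp hdisj h (mem_image_of_mem c hx)

lemma apply_mem_of_mem_image (hinv : Function.Involutive c) {x : X} (hx : x ∈ S.image c) :
    c x ∈ S := by
  obtain ⟨σ, hσ, rfl⟩ := mem_image.mp hx
  rwa [hinv σ]

lemma mem_or_apply_mem_of_union_image_eq_univ [Fintype X] (hinv : Function.Involutive c)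
    (hcover : S ∪ S.image c = univ) (x : X) : x ∈ S ∨ c x ∈ S :=
  (mem_union.mp (hcover ▸ mem_univ x)).imp id (apply_mem_of_mem_image hinv)

lemma isPairFree_reducedPart (T : Finset X) : IsPairFree c (reducedPart c T) := by
  intro x hx hcx
  simp_all

lemma pairedPart_subset_freePairs (hinv : Function.Involutive c) (T : Finset X) :
    pairedPart c S T ⊆ freePairs c S (reducedPart c T) := by
  intro σ
  simp only [mem_pairedPart, mem_freePairs, mem_reducedPart, hinv σ]
  tauto

lemma reducedPart_union_pairedPart (hinv : Function.Involutive c)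
    (hcover : ∀ x, x ∈ S ∨ c x ∈ S) (T : Finset X) :
    reducedPart c T ∪ pairedPart c S T ∪ (pairedPart c S T).image c = T := by
  ext x
  simp only [mem_union, mem_reducedPart, mem_pairedPart, mem_image]
  constructor
  · rintro ((⟨h, -⟩ | ⟨-, h, -⟩) | ⟨σ, ⟨-, -, h⟩, rfl⟩) <;> exact h
  · intro hx
    by_cases hcx : c x ∈ T
    · rcases hcover x with hxS | hcxS
      · exact Or.inl (Or.inr ⟨hxS, hx, hcx⟩)
      · exact Or.inr ⟨c x, ⟨hcxS, hcx, by rwa [hinv x]⟩, hinv x⟩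
    · exact Or.inl (Or.inl ⟨hx, hcx⟩)

section FreePairs

variable {R K : Finset X}

lemma reducedPart_union (hinv : Function.Involutive c) (hR : IsPairFree c R)
    (hK : K ⊆ freePairs c S R) : reducedPart c (R ∪ K ∪ K.image c) = R := by
  ext x
  have hK' : ∀ σ ∈ K, σ ∈ S ∧ σ ∉ R ∧ c σ ∉ R := fun σ hσ => mem_freePairs.mp (hK hσ)
  simp only [mem_reducedPart, mem_union, mem_image]
  grind [IsPairFree, Function.Involutive]

lemma pairedPart_union (hinv : Function.Involutive c) (hdisj : Disjoint S (S.image c))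
    (hR : IsPairFree c R) (hK : K ⊆ freePairs c S R) :
    pairedPart c S (R ∪ K ∪ K.image c) = K := by
  ext σ
  have hK' : ∀ σ ∈ K, σ ∈ S ∧ σ ∉ R ∧ c σ ∉ R := fun σ hσ => mem_freePairs.mp (hK hσ)
  have hS : ∀ σ ∈ S, c σ ∉ S := fun σ => apply_notMem_of_mem hdisj
  simp only [mem_pairedPart, mem_union, mem_image]
  grind [IsPairFree, Function.Involutive]

lemma card_union_image (hinv : Function.Involutive c) (hdisj : Disjoint S (S.image c))
    (hK : K ⊆ freePairs c S R) : (R ∪ K ∪ K.image c).card = R.card + 2 * K.card := by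
  have hRK : Disjoint R K := disjoint_right.mpr fun σ hσ => (mem_freePairs.mp (hK hσ)).2.1
  have hRKc : Disjoint (R ∪ K) (K.image c) := by
    simp only [disjoint_right, mem_image, mem_union, not_or]
    rintro _ ⟨σ, hσ, rfl⟩
    exact ⟨(mem_freePairs.mp (hK hσ)).2.2,
      fun h => apply_notMem_of_mem hdisj (mem_freePairs.mp (hK hσ)).1 (mem_freePairs.mp (hK h)).1⟩
  rw [card_union_of_disjoint hRKc, card_union_of_disjoint hRK,
    card_image_of_injective _ hinv.injective]
  ring

end FreePairs

lemma card_le_card_freePairs_add (hinv : Function.Involutive c) (hdisj : Disjoint S (S.image c))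
    (R : Finset X) : S.card ≤ (freePairs c S R).card + R.card := by
  have hsub : S \ freePairs c S R ⊆ R.image fun x => if x ∈ S then x else c x := by
    intro σ hσ
    simp only [mem_sdiff, mem_freePairs, not_and, not_not, mem_image] at hσ ⊢
    by_cases hσR : σ ∈ R
    · exact ⟨σ, hσR, if_pos hσ.1⟩
    · exact ⟨c σ, hσ.2 hσ.1 hσR, by rw [if_neg (apply_notMem_of_mem hdisj hσ.1), hinv σ]⟩
  calc S.card ≤ (S \ freePairs c S R).card + (freePairs c S R).card :=
        card_le_card_sdiff_add_card
    _ ≤ R.card + (freePairs c S R).card :=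
      Nat.add_le_add_right ((card_le_card hsub).trans card_image_le) _
    _ = _ := add_comm _ _

section ReducedType

variable {I J : Finset X}

lemma sdiff_image_eq_reducedPart_inter (hinv : Function.Involutive c)
    (hdisj : Disjoint S (S.image c)) (hI : I ⊆ S) (hJ : J ⊆ S.image c) :
    I \ J.image c = reducedPart c (I ∪ J) ∩ S := by
  ext x
  have hS : ∀ σ ∈ S, c σ ∉ S := fun σ => apply_notMem_of_mem hdisj
  have hJS : ∀ y ∈ J, c y ∈ S := fun y hy => apply_mem_of_mem_image hinv (hJ hy)
  have hIS : ∀ y ∈ I, y ∈ S := fun y hy => hI hy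
  simp only [mem_sdiff, mem_inter, mem_reducedPart, mem_union, mem_image]
  grind [Function.Involutive]

lemma sdiff_image_eq_reducedPart_sdiff (hinv : Function.Involutive c)
    (hdisj : Disjoint S (S.image c)) (hI : I ⊆ S) (hJ : J ⊆ S.image c) :
    J \ I.image c = reducedPart c (I ∪ J) \ S := by
  ext x
  have hS : ∀ σ ∈ S, c σ ∉ S := fun σ => apply_notMem_of_mem hdisj
  have hJS : ∀ y ∈ J, c y ∈ S := fun y hy => apply_mem_of_mem_image hinv (hJ hy)
  have hIS : ∀ y ∈ I, y ∈ S := fun y hy => hI hy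
  simp only [mem_sdiff, mem_reducedPart, mem_union, mem_image]
  grind [Function.Involutive]

lemma sdiff_image_eq_of_reducedPart_eq (hinv : Function.Involutive c)
    (hdisj : Disjoint S (S.image c)) {I' J' : Finset X} (hI : I ⊆ S) (hJ : J ⊆ S.image c)
    (hI' : I' ⊆ S) (hJ' : J' ⊆ S.image c) (h : reducedPart c (I ∪ J) = reducedPart c (I' ∪ J')) :
    I \ J.image c = I' \ J'.image c ∧ J \ I.image c = J' \ I'.image c := by
  rw [sdiff_image_eq_reducedPart_inter hinv hdisj hI hJ,
    sdiff_image_eq_reducedPart_inter hinv hdisj hI' hJ',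
    sdiff_image_eq_reducedPart_sdiff hinv hdisj hI hJ,
    sdiff_image_eq_reducedPart_sdiff hinv hdisj hI' hJ', h]
  exact ⟨rfl, rfl⟩

end ReducedType

end ReducedPart

section Lefschetz

variable {k X : Type*} [Field k] {c : X → X}

section DecidableEq

variable [DecidableEq X]

lemma Lsigma_commute_eVec (σ x : X) : Commute (Lsigma k c σ) (eVec k x) := by
  simp only [Commute, SemiconjBy, Lsigma, mul_assoc, eVec_mul_eVec_comm (c σ) x, mul_neg]
  simp only [← mul_assoc, eVec_mul_eVec_comm σ x, neg_mul, neg_neg]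

lemma Lsigma_commute (σ τ : X) : Commute (Lsigma k c σ) (Lsigma k c τ) :=
  ((Lsigma_commute_eVec σ τ).mul_right (Lsigma_commute_eVec σ (c τ)))

lemma Lsigma_mul_self (σ : X) : Lsigma k c σ * Lsigma k c σ = 0 := by
  show Lsigma k c σ * (eVec k σ * eVec k (c σ)) = 0
  rw [← mul_assoc, (Lsigma_commute_eVec σ σ).eq, Lsigma, ← mul_assoc, eVec_mul_self, zero_mul,
    zero_mul]

end DecidableEq

variable [LinearOrder X]

lemma LK_insert {σ : X} {K : Finset X} (hσ : σ ∉ K) :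
    LK k c (insert σ K) = Lsigma k c σ * LK k c K := by
  rw [LK, LK, ← List.prod_cons, ← List.map_cons]
  refine List.Perm.prod_eq' (List.Perm.map _ ?_)
    (List.pairwise_map.mpr (List.pairwise_of_forall fun _ _ => Lsigma_commute _ _))
  exact List.perm_of_nodup_nodup_toFinset_eq (sort_nodup _ _)
    (List.nodup_cons.mpr ⟨by simpa using hσ, sort_nodup _ _⟩) (by simp)

lemma Lsigma_commute_LK (σ : X) (K : Finset X) : Commute (Lsigma k c σ) (LK k c K) :=
  Commute.list_prod_right _ _ fun _ hx => by
    obtain ⟨τ, -, rfl⟩ := List.mem_map.mp hx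
    exact Lsigma_commute σ τ

lemma Lsigma_mul_eWedge_of_mem {σ : X} {T : Finset X} (h : σ ∈ T ∨ c σ ∈ T) :
    Lsigma k c σ * eWedge k T = 0 := by
  rcases h with h | h
  · rw [Lsigma, eVec_mul_eVec_comm, neg_mul, mul_assoc, eVec_mul_eWedge_of_mem h, mul_zero,
      neg_zero]
  · rw [Lsigma, mul_assoc, eVec_mul_eWedge_of_mem h, mul_zero]

lemma exists_Lsigma_mul_eWedge_eq_smul {σ : X} {T : Finset X} (hne : c σ ≠ σ) (hσ : σ ∉ T)
    (hcσ : c σ ∉ T) :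
    ∃ ε : k, ε ≠ 0 ∧ Lsigma k c σ * eWedge k T = ε • eWedge k (insert σ (insert (c σ) T)) := by
  obtain ⟨ε, hε, h⟩ := exists_eVec_mul_eWedge_eq_smul (k := k) hcσ
  obtain ⟨δ, hδ, h'⟩ := exists_eVec_mul_eWedge_eq_smul (k := k) (x := σ) (T := insert (c σ) T)
    (by simp [hσ, hne.symm])
  exact ⟨ε * δ, mul_ne_zero hε hδ, by rw [Lsigma, mul_assoc, h, mul_smul_comm, h', smul_smul]⟩

lemma exists_LK_mul_eWedge_eq_smul (hinv : Function.Involutive c) {S : Finset X}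
    (hdisj : Disjoint S (S.image c)) {K T : Finset X} (hK : K ⊆ freePairs c S T) :
    ∃ ε : k, ε ≠ 0 ∧ LK k c K * eWedge k T = ε • eWedge k (T ∪ K ∪ K.image c) := by
  induction K using Finset.induction_on with
  | empty => exact ⟨1, one_ne_zero, by simp [LK]⟩
  | @insert σ K hσK ih =>
    obtain ⟨ε, hε, h⟩ := ih ((subset_insert σ K).trans hK)
    have hK' : ∀ τ ∈ insert σ K, τ ∈ S ∧ τ ∉ T ∧ c τ ∉ T :=
      fun τ hτ => mem_freePairs.mp (hK hτ)
    have hS : ∀ τ ∈ S, c τ ∉ S := fun τ => apply_notMem_of_mem hdisj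
    have hσ : σ ∉ T ∪ K ∪ K.image c := by
      simp only [mem_union, mem_image]
      grind [Function.Involutive]
    have hcσ : c σ ∉ T ∪ K ∪ K.image c := by
      simp only [mem_union, mem_image]
      grind [Function.Involutive]
    obtain ⟨δ, hδ, h'⟩ := exists_Lsigma_mul_eWedge_eq_smul (k := k) (σ := σ) (by grind) hσ hcσ
    have hunion : insert σ (insert (c σ) (T ∪ K ∪ K.image c)) =
        T ∪ insert σ K ∪ (insert σ K).image c := by
      ext x
      simp only [mem_insert, mem_union, mem_image, image_insert]
      tauto
    refine ⟨ε * δ, mul_ne_zero hε hδ, ?_⟩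
    rw [LK_insert hσK, mul_assoc, h, mul_smul_comm, h', smul_smul, hunion]

end Lefschetz

section Coefficients

noncomputable def contract (k : Type*) {X : Type*} [Field k] (x : X) :
    ExteriorAlgebra k (X → k) →ₗ[k] ExteriorAlgebra k (X → k) :=
  CliffordAlgebra.contractLeft (LinearMap.proj x)

noncomputable def listCoeff (k : Type*) {X : Type*} [Field k] :
    List X → ExteriorAlgebra k (X → k) →ₗ[k] k
  | [] => ExteriorAlgebra.algebraMapInv.toLinearMap
  | x :: l => listCoeff k l ∘ₗ contract k x

/-- The coefficient of `e_T` with respect to the basis `(e_T)_T` of `Λ(V)`. -/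
noncomputable def wedgeCoeff (k : Type*) {X : Type*} [Field k] [LinearOrder X] (T : Finset X) :
    ExteriorAlgebra k (X → k) →ₗ[k] k :=
  listCoeff k (T.sort (· ≤ ·))

variable {k X : Type*} [Field k]

section DecidableEq

variable [DecidableEq X]

lemma contract_eVec_mul (x y : X) (w : ExteriorAlgebra k (X → k)) :
    contract k x (eVec k y * w) = (if y = x then w else 0) - eVec k y * contract k x w := by
  rw [contract, eVec, CliffordAlgebra.contractLeft_ι_mul]
  by_cases h : y = x <;> simp [h]

lemma contract_listWedge_of_notMem {x : X} {l : List X} (h : x ∉ l) :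
    contract k x (listWedge k l) = 0 := by
  induction l with
  | nil => exact CliffordAlgebra.contractLeft_one _ _
  | cons y l ih =>
    obtain ⟨hxy, hxl⟩ : x ≠ y ∧ x ∉ l := by simpa using h
    rw [listWedge_cons, contract_eVec_mul, if_neg (Ne.symm hxy), ih hxl, mul_zero, sub_zero]

lemma contract_eVec_mul_listWedge {x : X} {l : List X} (h : x ∉ l) :
    contract k x (eVec k x * listWedge k l) = listWedge k l := by
  rw [contract_eVec_mul, if_pos rfl, contract_listWedge_of_notMem h, mul_zero, sub_zero]

lemma listCoeff_listWedge {l : List X} (hl : l.Nodup) : listCoeff k l (listWedge k l) = 1 := by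
  induction l with
  | nil => simp [listCoeff]
  | cons x l ih =>
    obtain ⟨hx, hl⟩ := List.nodup_cons.mp hl
    simp only [listCoeff, LinearMap.comp_apply, listWedge_cons, contract_eVec_mul_listWedge hx,
      ih hl]

end DecidableEq

variable [LinearOrder X]

lemma algebraMapInv_eWedge {T : Finset X} (hT : T.Nonempty) :
    ExteriorAlgebra.algebraMapInv (eWedge k T) = 0 := by
  obtain ⟨x, l, hl⟩ := List.exists_cons_of_ne_nil (l := T.sort (· ≤ ·)) fun h =>
    hT.ne_empty (by rw [← sort_toFinset T (· ≤ ·), h, List.toFinset_nil])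
  simp [eWedge_eq_listWedge, hl, eVec, ExteriorAlgebra.algebraMapInv]

lemma contract_eWedge_of_notMem {x : X} {T : Finset X} (h : x ∉ T) :
    contract k x (eWedge k T) = 0 :=
  contract_listWedge_of_notMem (by simpa using h)

lemma exists_contract_eWedge_eq_smul {x : X} {T : Finset X} (h : x ∈ T) :
    ∃ ε : k, ε ≠ 0 ∧ contract k x (eWedge k T) = ε • eWedge k (T.erase x) := by
  obtain ⟨ε, hε, he⟩ := exists_eVec_mul_eWedge_eq_smul (k := k) (notMem_erase x T)
  rw [insert_erase h] at he
  refine ⟨ε⁻¹, inv_ne_zero hε, ?_⟩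
  rw [eq_inv_smul_iff₀ hε, ← map_smul, ← he, eWedge_eq_listWedge (T.erase x),
    contract_eVec_mul_listWedge (by simp)]

lemma listCoeff_eWedge_of_ne {l : List X} {T : Finset X} (h : l.toFinset ≠ T) :
    listCoeff k l (eWedge k T) = 0 := by
  induction l generalizing T with
  | nil => exact algebraMapInv_eWedge (nonempty_iff_ne_empty.mpr (by simpa [eq_comm] using h))
  | cons x l ih =>
    simp only [listCoeff, LinearMap.comp_apply]
    by_cases hx : x ∈ T
    · obtain ⟨ε, -, he⟩ := exists_contract_eWedge_eq_smul (k := k) hx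
      rw [he, map_smul, ih, smul_zero]
      intro hl
      exact h (by rw [List.toFinset_cons, hl, insert_erase hx])
    · rw [contract_eWedge_of_notMem hx, map_zero]

lemma wedgeCoeff_eWedge (T T' : Finset X) :
    wedgeCoeff k T (eWedge k T') = if T' = T then 1 else 0 := by
  split_ifs with h
  · subst h
    exact listCoeff_listWedge (sort_nodup _ _)
  · exact listCoeff_eWedge_of_ne (by simpa [eq_comm] using h)

end Coefficients

section BooleanLattice

noncomputable def raise (k : Type*) [Field k] {α : Type*} [DecidableEq α] (M : Finset α) :
    Module.End k (Finset α → k) :=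
  LinearMap.pi fun K => if K ⊆ M then ∑ σ ∈ K, LinearMap.proj (K.erase σ) else 0

noncomputable def lower (k : Type*) [Field k] {α : Type*} [DecidableEq α] (M : Finset α) :
    Module.End k (Finset α → k) :=
  LinearMap.pi fun K => ∑ σ ∈ M \ K, LinearMap.proj (insert σ K)

variable {k α : Type*} [Field k] [DecidableEq α] {M : Finset α} {q : ℕ} {f : Finset α → k}

lemma raise_apply (f : Finset α → k) (K : Finset α) :
    raise k M f K = if K ⊆ M then ∑ σ ∈ K, f (K.erase σ) else 0 := by
  unfold raise
  split_ifs <;> simp [*]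

lemma lower_apply (f : Finset α → k) (K : Finset α) :
    lower k M f K = ∑ σ ∈ M \ K, f (insert σ K) := by
  simp [lower]

lemma raise_single {K : Finset α} (hK : K ⊆ M) :
    raise k M (Pi.single K 1) = ∑ σ ∈ M \ K, Pi.single (insert σ K) 1 := by
  funext K'
  rw [raise_apply, Finset.sum_apply]
  split_ifs with hK'
  · simp only [Pi.single_apply, sum_boole]
    congr 2
    ext σ
    simp only [mem_filter, mem_sdiff]
    constructor
    · rintro ⟨hσ, rfl⟩
      exact ⟨⟨hK' hσ, notMem_erase σ K'⟩, (insert_erase hσ).symm⟩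
    · rintro ⟨⟨-, hσK⟩, rfl⟩
      exact ⟨mem_insert_self σ K, erase_insert hσK⟩
  · refine (sum_eq_zero fun σ hσ => ?_).symm
    rw [Pi.single_apply, if_neg]
    rintro rfl
    exact hK' (insert_subset (mem_sdiff.mp hσ).1 hK)

lemma support_raise_subset (hf : Function.support f ⊆ M.powersetCard q) :
    Function.support (raise k M f) ⊆ M.powersetCard (q + 1) := by
  intro K hK
  rw [Function.mem_support, raise_apply] at hK
  split_ifs at hK with hKM
  · obtain ⟨σ, hσ, hne⟩ := exists_ne_zero_of_sum_ne_zero hK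
    have hcard := (mem_powersetCard.mp (hf hne)).2
    rw [card_erase_of_mem hσ] at hcard
    have := card_pos.mpr ⟨σ, hσ⟩
    exact mem_powersetCard.mpr ⟨hKM, by omega⟩
  · exact absurd rfl hK

lemma support_raise_pow_subset (hf : Function.support f ⊆ M.powersetCard q) (n : ℕ) :
    Function.support ((raise k M ^ n) f) ⊆ M.powersetCard (q + n) := by
  induction n with
  | zero => simpa using hf
  | succ n ih =>
    rw [pow_succ', Module.End.mul_apply]
    exact support_raise_subset ih

lemma support_lower_subset (hf : Function.support f ⊆ M.powersetCard (q + 1)) :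
    Function.support (lower k M f) ⊆ M.powersetCard q := by
  intro K hK
  rw [Function.mem_support, lower_apply] at hK
  obtain ⟨σ, hσ, hne⟩ := exists_ne_zero_of_sum_ne_zero hK
  obtain ⟨hσM, hσK⟩ := mem_sdiff.mp hσ
  obtain ⟨hsub, hcard⟩ := mem_powersetCard.mp (hf hne)
  rw [card_insert_of_notMem hσK] at hcard
  exact mem_powersetCard.mpr ⟨(subset_insert σ K).trans hsub, by omega⟩

lemma lower_eq_zero (hf : Function.support f ⊆ M.powersetCard 0) : lower k M f = 0 := by
  funext K
  rw [lower_apply, Pi.zero_apply]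
  refine sum_eq_zero fun σ _ => not_not.mp fun hne => ?_
  simpa using (mem_powersetCard.mp (hf hne)).2

lemma lower_raise_apply (f : Finset α → k) {K : Finset α} (hK : K ⊆ M) :
    lower k M (raise k M f) K =
      ((M.card : k) - K.card) * f K + ∑ σ ∈ M \ K, ∑ τ ∈ K, f (insert σ (K.erase τ)) := by
  have hstep : ∀ σ ∈ M \ K,
      raise k M f (insert σ K) = f K + ∑ τ ∈ K, f (insert σ (K.erase τ)) := by
    intro σ hσ
    obtain ⟨hσM, hσK⟩ := mem_sdiff.mp hσ
    rw [raise_apply, if_pos (insert_subset hσM hK), sum_insert hσK, erase_insert hσK]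
    congr 1
    exact sum_congr rfl fun τ hτ => by
      rw [erase_insert_of_ne (ne_of_mem_of_not_mem hτ hσK).symm]
  rw [lower_apply, sum_congr rfl hstep, sum_add_distrib, sum_const, nsmul_eq_mul,
    card_sdiff_of_subset hK, Nat.cast_sub (card_le_card hK)]

lemma raise_lower_apply (f : Finset α → k) {K : Finset α} (hK : K ⊆ M) :
    raise k M (lower k M f) K =
      (K.card : k) * f K + ∑ τ ∈ K, ∑ σ ∈ M \ K, f (insert σ (K.erase τ)) := by
  have hstep : ∀ τ ∈ K,
      lower k M f (K.erase τ) = f K + ∑ σ ∈ M \ K, f (insert σ (K.erase τ)) := by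
    intro τ hτ
    rw [lower_apply, sdiff_erase (hK hτ), sum_insert (by simp [hτ]), insert_erase hτ]
  rw [raise_apply, if_pos hK, sum_congr rfl hstep, sum_add_distrib, sum_const, nsmul_eq_mul]

lemma lower_raise_sub_raise_lower (hf : Function.support f ⊆ M.powersetCard q) :
    lower k M (raise k M f) - raise k M (lower k M f) = ((M.card : k) - 2 * q) • f := by
  funext K
  simp only [Pi.sub_apply, Pi.smul_apply, smul_eq_mul]
  by_cases hKM : K ⊆ M
  · rw [lower_raise_apply f hKM, raise_lower_apply f hKM, sum_comm]
    by_cases hfK : f K = 0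
    · rw [hfK]
      ring
    · rw [(mem_powersetCard.mp (hf hfK)).2]
      ring
  · have hfK : f K = 0 := not_not.mp fun h => hKM (mem_powersetCard.mp (hf h)).1
    rw [lower_apply, raise_apply, if_neg hKM, hfK, mul_zero, sub_zero]
    exact sum_eq_zero fun σ _ => by
      rw [raise_apply, if_neg fun h => hKM ((subset_insert σ K).trans h)]

lemma lower_raise_pow (hf : Function.support f ⊆ M.powersetCard q) (n : ℕ) :
    lower k M ((raise k M ^ (n + 1)) f) = (raise k M ^ (n + 1)) (lower k M f) +
      (((n : k) + 1) * ((M.card : k) - 2 * q - n)) • (raise k M ^ n) f := by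
  induction n with
  | zero =>
    rw [pow_one, pow_zero, Module.End.one_apply, ← sub_eq_iff_eq_add',
      lower_raise_sub_raise_lower hf]
    congr 1
    push_cast
    ring
  | succ n ih =>
    have hcomm := lower_raise_sub_raise_lower (support_raise_pow_subset hf (n + 1))
    rw [sub_eq_iff_eq_add'] at hcomm
    rw [pow_succ' (raise k M) (n + 1), Module.End.mul_apply, hcomm, ih, map_add, map_smul,
      ← Module.End.mul_apply, ← pow_succ', ← Module.End.mul_apply (raise k M), ← pow_succ',
      add_assoc, ← add_smul]
    congr 2
    push_cast
    ring

theorem eq_zero_of_raise_pow_eq_zero [CharZero k] {n : ℕ}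
    (hf : Function.support f ⊆ M.powersetCard q) (hn : 2 * q + n ≤ M.card)
    (h : (raise k M ^ n) f = 0) : f = 0 := by
  induction q using Nat.strong_induction_on generalizing n f with
  | _ q ihq =>
  induction n generalizing f with
  | zero => simpa using h
  | succ n ihn =>
    have hlower : lower k M f = 0 := by
      rcases q with _ | q
      · exact lower_eq_zero hf
      · refine ihq q (by omega) (n := n + 2) (support_lower_subset hf) (by omega) ?_
        have hzero : (raise k M ^ (n + 1 + 1)) f = 0 := by
          rw [pow_succ', Module.End.mul_apply, h, map_zero]
        have h2 := lower_raise_pow hf (n + 1)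
        rwa [hzero, h, map_zero, smul_zero, add_zero, eq_comm] at h2
    have hc : ((n : k) + 1) * ((M.card : k) - 2 * q - n) ≠ 0 := by
      have : (M.card : k) - 2 * q - n = ((M.card - (2 * q + n) : ℕ) : k) := by
        rw [Nat.cast_sub (by omega)]
        push_cast
        ring
      rw [this]
      exact mul_ne_zero (Nat.cast_add_one_ne_zero n) (Nat.cast_ne_zero.mpr (by omega))
    have h1 := lower_raise_pow hf n
    rw [h, hlower, map_zero, map_zero, zero_add, eq_comm, smul_eq_zero] at h1
    exact ihn hf (by omega) (h1.resolve_left hc)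

end BooleanLattice

section Sectors

variable {k X : Type*} [Field k] [LinearOrder X] {c : X → X} {S R R₀ K : Finset X}

lemma Lef_mul_LK_mul_eWedge :
    Lef k c S * (LK k c K * eWedge k R) =
      ∑ σ ∈ freePairs c S R \ K, LK k c (insert σ K) * eWedge k R := by
  rw [Lef, sum_mul]
  refine (sum_subset (sdiff_subset.trans (filter_subset _ _)) fun σ hσS hσ => ?_).symm.trans
    (sum_congr rfl fun σ hσ => by rw [LK_insert (mem_sdiff.mp hσ).2, mul_assoc])
  by_cases hσK : σ ∈ K
  · rw [← insert_erase hσK, LK_insert (notMem_erase σ K), ← mul_assoc, ← mul_assoc,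
      Lsigma_mul_self, zero_mul, zero_mul]
  · have hσR : σ ∈ R ∨ c σ ∈ R := by
      by_contra h
      exact hσ (mem_sdiff.mpr ⟨mem_freePairs.mpr ⟨hσS, not_or.mp h⟩, hσK⟩)
    rw [← mul_assoc, (Lsigma_commute_LK σ K).eq, mul_assoc, Lsigma_mul_eWedge_of_mem hσR,
      mul_zero]

variable (k c S) in
/-- The coordinates of `z` along the vectors `L_K e_R`, `K ⊆ freePairs c S R`; since
`L_K e_R = ± e_{R ∪ K ∪ cK}`, they are rescaled coefficients of `z`. -/
noncomputable def sectorCoeff (R : Finset X) : ExteriorAlgebra k (X → k) →ₗ[k] (Finset X → k) :=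
  LinearMap.pi fun K => if K ⊆ freePairs c S R then
    (wedgeCoeff k (R ∪ K ∪ K.image c) (LK k c K * eWedge k R))⁻¹ •
      wedgeCoeff k (R ∪ K ∪ K.image c)
  else 0

lemma sectorCoeff_apply_of_subset (hK : K ⊆ freePairs c S R) (z : ExteriorAlgebra k (X → k)) :
    sectorCoeff k c S R z K = (wedgeCoeff k (R ∪ K ∪ K.image c) (LK k c K * eWedge k R))⁻¹ *
      wedgeCoeff k (R ∪ K ∪ K.image c) z := by
  simp [sectorCoeff, hK]

lemma sectorCoeff_apply_of_not_subset (hK : ¬ K ⊆ freePairs c S R)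
    (z : ExteriorAlgebra k (X → k)) : sectorCoeff k c S R z K = 0 := by
  simp [sectorCoeff, hK]

lemma wedgeCoeff_LK_mul_eWedge_ne_zero (hinv : Function.Involutive c)
    (hdisj : Disjoint S (S.image c)) (hK : K ⊆ freePairs c S R) :
    wedgeCoeff k (R ∪ K ∪ K.image c) (LK k c K * eWedge k R) ≠ 0 := by
  obtain ⟨ε, hε, he⟩ := exists_LK_mul_eWedge_eq_smul (k := k) hinv hdisj hK
  simpa [he, wedgeCoeff_eWedge] using hε

lemma sectorCoeff_LK_mul_eWedge (hinv : Function.Involutive c) (hdisj : Disjoint S (S.image c))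
    (hR₀ : IsPairFree c R₀) (hR : IsPairFree c R) (hK : K ⊆ freePairs c S R) :
    sectorCoeff k c S R₀ (LK k c K * eWedge k R) = if R = R₀ then Pi.single K 1 else 0 := by
  funext K'
  by_cases hK' : K' ⊆ freePairs c S R₀
  · rw [sectorCoeff_apply_of_subset hK']
    by_cases hT : R ∪ K ∪ K.image c = R₀ ∪ K' ∪ K'.image c
    · obtain rfl : R = R₀ := by
        rw [← reducedPart_union hinv hR hK, hT, reducedPart_union hinv hR₀ hK']
      obtain rfl : K = K' := by
        rw [← pairedPart_union hinv hdisj hR hK, hT, pairedPart_union hinv hdisj hR hK']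
      rw [inv_mul_cancel₀ (wedgeCoeff_LK_mul_eWedge_ne_zero hinv hdisj hK)]
      simp
    · obtain ⟨ε, -, he⟩ := exists_LK_mul_eWedge_eq_smul (k := k) hinv hdisj hK
      rw [he, map_smul, wedgeCoeff_eWedge, if_neg hT, smul_zero, mul_zero]
      split_ifs with hRR₀
      · subst hRR₀
        rw [Pi.single_apply, if_neg]
        rintro rfl
        exact hT rfl
      · rfl
  · rw [sectorCoeff_apply_of_not_subset hK']
    split_ifs with hRR₀
    · subst hRR₀
      rw [Pi.single_apply, if_neg]
      rintro rfl
      exact hK' hK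
    · rfl

lemma sectorCoeff_Lef_pow_mul_LK_mul_eWedge (hinv : Function.Involutive c)
    (hdisj : Disjoint S (S.image c)) (hR₀ : IsPairFree c R₀) (hR : IsPairFree c R)
    (hK : K ⊆ freePairs c S R) (n : ℕ) :
    sectorCoeff k c S R₀ (Lef k c S ^ n * (LK k c K * eWedge k R)) =
      if R = R₀ then (raise k (freePairs c S R₀) ^ n) (Pi.single K 1) else 0 := by
  induction n generalizing K with
  | zero => simpa using sectorCoeff_LK_mul_eWedge hinv hdisj hR₀ hR hK
  | succ n ih =>
    have hstep : ∀ σ ∈ freePairs c S R \ K, sectorCoeff k c S R₀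
        (Lef k c S ^ n * (LK k c (insert σ K) * eWedge k R)) =
          if R = R₀ then (raise k (freePairs c S R₀) ^ n) (Pi.single (insert σ K) 1) else 0 :=
      fun σ hσ => ih (insert_subset (mem_sdiff.mp hσ).1 hK)
    rw [pow_succ, mul_assoc, Lef_mul_LK_mul_eWedge, mul_sum, map_sum, sum_congr rfl hstep]
    split_ifs with hRR₀
    · subst hRR₀
      rw [← map_sum, ← raise_single hK, pow_succ, Module.End.mul_apply]
    · exact sum_const_zero

lemma exists_eWedge_eq_smul_LK_mul_eWedge (hinv : Function.Involutive c)
    (hdisj : Disjoint S (S.image c)) (hcover : ∀ x, x ∈ S ∨ c x ∈ S) (T : Finset X) :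
    ∃ ε : k, ε ≠ 0 ∧
      eWedge k T = ε • (LK k c (pairedPart c S T) * eWedge k (reducedPart c T)) := by
  obtain ⟨ε, hε, he⟩ :=
    exists_LK_mul_eWedge_eq_smul (k := k) hinv hdisj (pairedPart_subset_freePairs hinv T)
  rw [reducedPart_union_pairedPart hinv hcover] at he
  exact ⟨ε⁻¹, inv_ne_zero hε, by rw [he, inv_smul_smul₀ hε]⟩

lemma sectorCoeff_Lef_pow_mul_eWedge (hinv : Function.Involutive c)
    (hdisj : Disjoint S (S.image c)) (hcover : ∀ x, x ∈ S ∨ c x ∈ S) (hR₀ : IsPairFree c R₀)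
    (n : ℕ) (T : Finset X) :
    sectorCoeff k c S R₀ (Lef k c S ^ n * eWedge k T) =
      (raise k (freePairs c S R₀) ^ n) (sectorCoeff k c S R₀ (eWedge k T)) := by
  obtain ⟨ε, -, he⟩ := exists_eWedge_eq_smul_LK_mul_eWedge (k := k) hinv hdisj hcover T
  have hpow := sectorCoeff_Lef_pow_mul_LK_mul_eWedge (k := k) hinv hdisj hR₀
    (isPairFree_reducedPart T) (pairedPart_subset_freePairs hinv T)
  rw [he, mul_smul_comm, map_smul, map_smul, map_smul, hpow n, ← one_mul (LK k c _ * _),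
    ← pow_zero (Lef k c S), hpow 0]
  split_ifs <;> simp

lemma sectorCoeff_Lef_pow_mul_sum (hinv : Function.Involutive c)
    (hdisj : Disjoint S (S.image c)) (hcover : ∀ x, x ∈ S ∨ c x ∈ S) (hR₀ : IsPairFree c R₀)
    (n : ℕ) (s : Finset (Finset X)) (a : Finset X → k) :
    sectorCoeff k c S R₀ (Lef k c S ^ n * ∑ T ∈ s, a T • eWedge k T) =
      (raise k (freePairs c S R₀) ^ n) (sectorCoeff k c S R₀ (∑ T ∈ s, a T • eWedge k T)) := by
  simp only [mul_sum, mul_smul_comm, map_sum, map_smul,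
    sectorCoeff_Lef_pow_mul_eWedge hinv hdisj hcover hR₀]

lemma sectorCoeff_eWedge_eq_zero (hinv : Function.Involutive c) (hR₀ : IsPairFree c R₀)
    {T : Finset X} (hT : reducedPart c T ≠ R₀) : sectorCoeff k c S R₀ (eWedge k T) = 0 := by
  funext K
  by_cases hK : K ⊆ freePairs c S R₀
  · rw [sectorCoeff_apply_of_subset hK, wedgeCoeff_eWedge, if_neg, mul_zero, Pi.zero_apply]
    rintro rfl
    exact hT (reducedPart_union hinv hR₀ hK)
  · rw [sectorCoeff_apply_of_not_subset hK, Pi.zero_apply]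

lemma sectorCoeff_sum_apply (hK : K ⊆ freePairs c S R₀) (s : Finset (Finset X))
    (a : Finset X → k) :
    sectorCoeff k c S R₀ (∑ T ∈ s, a T • eWedge k T) K =
      if R₀ ∪ K ∪ K.image c ∈ s then
        (wedgeCoeff k (R₀ ∪ K ∪ K.image c) (LK k c K * eWedge k R₀))⁻¹ * a (R₀ ∪ K ∪ K.image c)
      else 0 := by
  simp [sectorCoeff_apply_of_subset hK, wedgeCoeff_eWedge]

lemma support_sectorCoeff_sum_subset [Fintype X] (hinv : Function.Involutive c)
    (hdisj : Disjoint S (S.image c)) {m p : ℕ} (hm : R₀.card + 2 * p = m) (a : Finset X → k) :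
    Function.support (sectorCoeff k c S R₀
      (∑ T ∈ univ.filter (fun T : Finset X => T.card = m), a T • eWedge k T)) ⊆
        (freePairs c S R₀).powersetCard p := by
  intro K hK
  by_cases hKA : K ⊆ freePairs c S R₀
  · rw [Function.mem_support, sectorCoeff_sum_apply hKA] at hK
    split_ifs at hK with hmem
    · rw [mem_filter, card_union_image hinv hdisj hKA] at hmem
      exact mem_powersetCard.mpr ⟨hKA, by omega⟩
    · exact absurd rfl hK
  · exact absurd (sectorCoeff_apply_of_not_subset hKA _) hK

end Sectors

theorem stmt10_general (k X : Type*) [Field k] [CharZero k] [Fintype X] [LinearOrder X]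
    (c : X → X) (hinv : Function.Involutive c)
    (S : Finset X) (hdisj : Disjoint S (S.image c)) (hcover : S ∪ S.image c = Finset.univ)
    (g i : ℕ) (hg : g = S.card) (hi2 : 2 ≤ i) (hig : i ≤ g)
    (I J : Finset X) (hI : I ⊆ S) (hJ : J ⊆ S.image c)
    (η : ExteriorAlgebra k (X → k))
    (heq : Lef k c S ^ (g - i + 2) * η = Lef k c S ^ (g - i + 1) * eWedge k (I ∪ J))
    (coeff : Finset X → k)
    (hcoeff : η = ∑ T ∈ Finset.univ.filter (fun T : Finset X => T.card = i - 2),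
      coeff T • eWedge k T)
    (I' J' : Finset X) (hI' : I' ⊆ S) (hJ' : J' ⊆ S.image c)
    (hcard' : I'.card + J'.card = i - 2)
    (hne : coeff (I' ∪ J') ≠ 0) :
    I \ J.image c = I' \ J'.image c ∧ J \ I.image c = J' \ I'.image c := by
  have hcover' : ∀ x, x ∈ S ∨ c x ∈ S := mem_or_apply_mem_of_union_image_eq_univ hinv hcover
  refine sdiff_image_eq_of_reducedPart_eq hinv hdisj hI hJ hI' hJ' (not_not.mp fun hR => ?_)
  set R₀ := reducedPart c (I' ∪ J')
  set K₀ := pairedPart c S (I' ∪ J')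
  have hR₀ : IsPairFree c R₀ := isPairFree_reducedPart _
  have hK₀ : K₀ ⊆ freePairs c S R₀ := pairedPart_subset_freePairs hinv _
  have hT₀ : R₀ ∪ K₀ ∪ K₀.image c = I' ∪ J' := reducedPart_union_pairedPart hinv hcover' _
  have hT₀card : (R₀ ∪ K₀ ∪ K₀.image c).card = i - 2 := by
    rw [hT₀, card_union_of_disjoint (hdisj.mono hI' hJ'), hcard']
  have hcard₀ : R₀.card + 2 * K₀.card = i - 2 := card_union_image hinv hdisj hK₀ ▸ hT₀card
  have hraise : (raise k (freePairs c S R₀) ^ (g - i + 2)) (sectorCoeff k c S R₀ η) = 0 := by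
    rw [hcoeff, ← sectorCoeff_Lef_pow_mul_sum hinv hdisj hcover' hR₀, ← hcoeff, heq,
      sectorCoeff_Lef_pow_mul_eWedge hinv hdisj hcover' hR₀,
      sectorCoeff_eWedge_eq_zero hinv hR₀ hR, map_zero]
  have hsupp := hcoeff ▸ support_sectorCoeff_sum_subset hinv hdisj hcard₀ coeff
  have hA := card_le_card_freePairs_add hinv hdisj R₀
  have hzero := congrFun (eq_zero_of_raise_pow_eq_zero hsupp (by omega) hraise) K₀
  rw [hcoeff, sectorCoeff_sum_apply hK₀, if_pos (by simpa using hT₀card)] at hzero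
  exact mul_ne_zero (inv_ne_zero (wedgeCoeff_LK_mul_eWedge_ne_zero hinv hdisj hK₀))
    (hT₀ ▸ hne) hzero

/-- Lemma 2.4 of the paper and its consequence, in the exterior-algebra model: let
`2 ≤ i ≤ g`, `I ⊆ Σ`, `J ⊆ cΣ` with `|I| + |J| = i`, and let `η ∈ Λ^{i-2}V` be the (unique,
by hard Lefschetz) element with `L^{g-i+2} ∧ η = L^{g-i+1} ∧ e_{I∪J}` (so `η` models the
Lefschetz operator `Λ = θ_{i-2} L^{g-i+1}` applied to `ω_{IJ}`). If the coefficient of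
`e_{I'∪J'}` in `η` with respect to the basis `{e_T : |T| = i-2}` of `Λ^{i-2}V` is nonzero,
then `(I, J)` and `(I', J')` have the same reduced type:
`I \ c(J) = I' \ c(J')` and `J \ c(I) = J' \ c(I')`. -/
theorem stmt10 (k X : Type*) [Field k] [CharZero k] [Fintype X] [LinearOrder X]
    (c : X → X) (hinv : Function.Involutive c) (hfree : ∀ x : X, c x ≠ x)
    (S : Finset X) (hdisj : Disjoint S (S.image c)) (hcover : S ∪ S.image c = Finset.univ)
    (g i : ℕ) (hg : g = S.card) (hi2 : 2 ≤ i) (hig : i ≤ g)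
    (I J : Finset X) (hI : I ⊆ S) (hJ : J ⊆ S.image c) (hcard : I.card + J.card = i)
    (η : ExteriorAlgebra k (X → k))
    (hη : η ∈ (LinearMap.range
        (ExteriorAlgebra.ι k : (X → k) →ₗ[k] ExteriorAlgebra k (X → k)) ^ (i - 2) :
      Submodule k (ExteriorAlgebra k (X → k))))
    (heq : Lef k c S ^ (g - i + 2) * η = Lef k c S ^ (g - i + 1) * eWedge k (I ∪ J))
    (coeff : Finset X → k)
    (hcoeff : η = ∑ T ∈ Finset.univ.filter (fun T : Finset X => T.card = i - 2),
      coeff T • eWedge k T)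
    (I' J' : Finset X) (hI' : I' ⊆ S) (hJ' : J' ⊆ S.image c)
    (hcard' : I'.card + J'.card = i - 2)
    (hne : coeff (I' ∪ J') ≠ 0) :
    I \ J.image c = I' \ J'.image c ∧ J \ I.image c = J' \ I'.image c :=
  stmt10_general k X c hinv S hdisj hcover g i hg hi2 hig I J hI hJ η heq coeff hcoeff I' J' hI' hJ'
    hcard' hne
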